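/- Let A ∈ ℝ^{I×R}, B ∈ ℝ^{J×R}, C ∈ ℝ^{K×R}, let T = [A,B,C]_R, and let 2 ≤ m ≤ min(I,J,K,R). Then R_m(T) = [C_m(A) ⊙ C_m(B)] · R_m(C)^T, where R_m(T) is the C(I,m)C(J,m) × K^m matrix whose column indexed by (j_1,…,j_m) ∈ {1,…,K}^m is vec(D^{m−1}(T_{j_1},…,T_{j_m})), with T_1,…,T_K the frontal slices of T. -/

import Mathlib

open scoped BigOperators Matrix

noncomputable section

/-- The permanent of a square matrix over a commutative ring. -/
def permanent {α : Type*} [CommRing α] {n : ℕ} (A : Matrix (Fin n) (Fin n) α) : α :=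
  ∑ σ : Equiv.Perm (Fin n), ∏ i, A i (σ i)

/-- The `m`-th compound matrix: the matrix of all `m × m` minors, with rows indexed by
`m`-element subsets of the rows and columns indexed by `m`-element subsets of the columns
(a subset of size `m` is enumerated in increasing order). -/
def compound {α : Type*} [CommRing α] {I J : ℕ} (m : ℕ) (A : Matrix (Fin I) (Fin J) α) :
    Matrix {s : Finset (Fin I) // s.card = m} {t : Finset (Fin J) // t.card = m} α :=
  Matrix.of fun s t => Matrix.det (Matrix.of fun a b : Fin m =>
    A (s.1.orderIsoOfFin s.2 a : Fin I) (t.1.orderIsoOfFin t.2 b : Fin J))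

/-- The polarized compound matrix `D^{m−1}(T_1,…,T_m)`: the `C(I,m) × C(J,m)` matrix
`∂^m C_m(x_1 T_1 + … + x_m T_m)/∂x_1 ⋯ ∂x_m` at `x = 0`, realized entrywise as the
coefficient of the monomial `x_1 ⋯ x_m` in the corresponding entry of the `m`-th compound
matrix of `x_1 T_1 + … + x_m T_m`; equivalently, its `(S,T)` entry is the mixed
discriminant of the submatrices `T_1(S,T),…,T_m(S,T)`. -/
noncomputable def polarizedCompound {I J m : ℕ} (T : Fin m → Matrix (Fin I) (Fin J) ℝ) :
    Matrix {s : Finset (Fin I) // s.card = m} {t : Finset (Fin J) // t.card = m} ℝ :=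
  Matrix.of fun s t =>
    MvPolynomial.coeff (∑ i : Fin m, Finsupp.single i 1)
      (compound m (Matrix.of fun a b =>
        ∑ i : Fin m, MvPolynomial.X i * MvPolynomial.C (T i a b)) s t)

/-- The Khatri–Rao (column-wise Kronecker) product of two matrices. -/
def khatriRao {α β γ : Type*} (A : Matrix α γ ℝ) (B : Matrix β γ ℝ) : Matrix (α × β) γ ℝ :=
  Matrix.of fun p r => A p.1 r * B p.2 r

/-- The matrix `R_m(C)`: rows are indexed by tuples `(i_1,…,i_m) ∈ {1,…,K}^m`, columns by
`m`-element subsets `{j_1 < … < j_m}` of the columns of `C`, and the corresponding entry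
is the permanent of the `m × m` submatrix of `C` on rows `i_1,…,i_m` and columns
`j_1,…,j_m`. -/
def Rmat {K R : ℕ} (m : ℕ) (C : Matrix (Fin K) (Fin R) ℝ) :
    Matrix (Fin m → Fin K) {t : Finset (Fin R) // t.card = m} ℝ :=
  Matrix.of fun i t =>
    permanent (Matrix.of fun a b : Fin m => C (i a) (t.1.orderIsoOfFin t.2 b : Fin R))


/-!
The `(S, T)` entry of `D^{m−1}(T_{j_1}, …, T_{j_m})` is the mixed discriminant of the blocks
`T_{j_i}(S, T) = A_S diag(c_{j_i}) B_Tᵀ`, where `c_k` is the `k`-th row of `C`: the sum over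
`q ∈ S_m` of the determinants of the matrices whose `b`-th column is that of `T_{j_{q b}}(S, T)`.
Each such matrix factors as `A_S · H_q` with `H_q(r, b) = C(j_{q b}, r) B_T(b, r)`, so
Cauchy–Binet expands its determinant as a sum over `m`-subsets `ω` of
`det A_{S,ω} · det H_q(ω, ·)`, and summing `det H_q(ω, ·)` over `q` gives `det B_{T,ω}` times the
permanent of `C(j, ω)`.
-/

open Finset Equiv

theorem sum_filter_injective_eq_sum_orderEmbOfFin_comp_perm {α M : Type*} [LinearOrder α]
    [Fintype α] [AddCommMonoid M] {m : ℕ} (h : (Fin m → α) → M) :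
    ∑ p ∈ univ.filter Function.Injective, h p =
      ∑ ω : {s : Finset α // s.card = m}, ∑ τ : Perm (Fin m),
        h (ω.1.orderEmbOfFin ω.2 ∘ τ) := by
  rw [← Fintype.sum_prod_type']
  symm
  refine sum_nbij (fun x => x.1.1.orderEmbOfFin x.1.2 ∘ x.2) ?_ ?_ ?_ fun _ _ => rfl
  · intro x _
    simpa using (x.1.1.orderEmbOfFin x.1.2).injective.comp x.2.injective
  · rintro ⟨ω, τ⟩ - ⟨ω', τ'⟩ - hωτ
    have hrange := congrArg Set.range hωτ
    simp only [EquivLike.range_comp, range_orderEmbOfFin, coe_inj] at hrange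
    obtain rfl : ω = ω' := Subtype.ext hrange
    exact Prod.ext rfl <| Equiv.ext fun b => (ω.1.orderEmbOfFin ω.2).injective (congrFun hωτ b)
  · intro p hp
    have hinj : Function.Injective p := (mem_filter.1 hp).2
    have hcard : (univ.image p).card = m := by
      rw [card_image_of_injective _ hinj, card_univ, Fintype.card_fin]
    -- `p` is the increasing enumeration of its image, precomposed with the inverse of the
    -- permutation that sorts it
    have hsorted : p ∘ Tuple.sort p = (univ.image p).orderEmbOfFin hcard :=
      orderEmbOfFin_unique hcard (fun x => mem_image_of_mem p (mem_univ _))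
        ((Tuple.monotone_sort p).strictMono_of_injective (hinj.comp (Tuple.sort p).injective))
    refine ⟨(⟨univ.image p, hcard⟩, (Tuple.sort p)⁻¹), mem_univ _, ?_⟩
    simp only [← hsorted]
    funext b
    simp

theorem Equiv.Perm.sum_filter_bijective {n M : Type*} [Fintype n] [DecidableEq n]
    [AddCommMonoid M] (h : (n → n) → M) :
    ∑ q ∈ univ.filter Function.Bijective, h q = ∑ τ : Perm n, h τ :=
  sum_bij (fun q hq => Equiv.ofBijective q (mem_filter.1 hq).2) (fun _ _ => mem_univ _)
    (fun _ _ _ _ h => by injection h)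
    (fun τ _ => ⟨τ, mem_filter.2 ⟨mem_univ _, τ.bijective⟩, coe_fn_injective rfl⟩) fun _ _ => rfl

namespace Matrix

variable {n α R : Type*} [Fintype n] [DecidableEq n] [Fintype α] [CommRing R]

theorem det_mul_eq_sum_prod_mul_det_submatrix {m : ℕ} (F : Matrix (Fin m) α R)
    (G : Matrix α (Fin m) R) :
    det (F * G) = ∑ p : Fin m → α, (∏ i, G (p i) i) * det (F.submatrix id p) := by
  simp only [det_apply', mul_apply, prod_univ_sum, Fintype.piFinset_univ, mul_sum,
    submatrix_apply, id]
  rw [sum_comm]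
  refine sum_congr rfl fun p _ => sum_congr rfl fun σ _ => ?_
  rw [prod_mul_distrib]
  ring

theorem det_mul_eq_sum_det_mul_det [LinearOrder α] {m : ℕ} (F : Matrix (Fin m) α R)
    (G : Matrix α (Fin m) R) :
    det (F * G) = ∑ ω : {s : Finset α // s.card = m},
      det (F.submatrix id (ω.1.orderEmbOfFin ω.2)) *
        det (G.submatrix (ω.1.orderEmbOfFin ω.2) id) := by
  have hnoninj : ∀ p ∈ univ.filter fun p : Fin m → α => ¬ p.Injective,
      (∏ i, G (p i) i) * det (F.submatrix id p) = 0 := by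
    intro p hp
    obtain ⟨i, j, hpij, hij⟩ := Function.not_injective_iff.1 (mem_filter.1 hp).2
    rw [det_zero_of_column_eq hij fun k => by simp [hpij], mul_zero]
  rw [det_mul_eq_sum_prod_mul_det_submatrix, ← sum_filter_add_sum_filter_not _ Function.Injective,
    sum_eq_zero hnoninj, add_zero, sum_filter_injective_eq_sum_orderEmbOfFin_comp_perm]
  refine sum_congr rfl fun ω _ => ?_
  have hperm (τ : Perm (Fin m)) : det (F.submatrix id (ω.1.orderEmbOfFin ω.2 ∘ τ)) =
      Perm.sign τ * det (F.submatrix id (ω.1.orderEmbOfFin ω.2)) :=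
    det_permute' τ (F.submatrix id (ω.1.orderEmbOfFin ω.2))
  simp only [hperm, det_apply' (G.submatrix _ id), mul_sum, submatrix_apply, Function.comp_apply,
    id]
  refine sum_congr rfl fun τ _ => ?_
  ring

theorem sum_perm_det_mul_eq_det_mul_permanent (P M : Matrix n n R) :
    ∑ q : Perm n, det (of fun a b => P (q b) a * M a b) = det M * P.permanent := by
  have hrows (σ : Perm n) : ∑ q : Perm n, ∏ b, P (q b) (σ b) = P.permanent :=
    permanent_permute_rows σ P
  simp only [det_apply', of_apply, prod_mul_distrib]
  rw [sum_comm, sum_mul]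
  refine sum_congr rfl fun σ _ => ?_
  rw [← hrows σ, mul_sum]
  refine sum_congr rfl fun q _ => ?_
  ring

/-- The mixed discriminant, normalized as the coefficient of `x_1 ⋯ x_n` in `det (∑ i, x_i • E i)`
(some authors divide by `n!`). -/
def mixedDiscriminant (E : n → Matrix n n R) : R :=
  ∑ q : Perm n, det (of fun a b => E (q b) a b)

theorem mixedDiscriminant_mul_diagonal_mul_transpose [LinearOrder α] {m : ℕ}
    (F G c : Matrix (Fin m) α R) :
    mixedDiscriminant (fun i => F * diagonal (c i) * Gᵀ) =
      ∑ ω : {s : Finset α // s.card = m},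
        det (F.submatrix id (ω.1.orderEmbOfFin ω.2)) *
          det (G.submatrix id (ω.1.orderEmbOfFin ω.2)) *
          (c.submatrix id (ω.1.orderEmbOfFin ω.2)).permanent := by
  have hcol (q : Perm (Fin m)) : (of fun a b => (F * diagonal (c (q b)) * Gᵀ) a b) =
      F * of fun r b => c (q b) r * G b r := by
    ext a b
    rw [of_apply, mul_apply, mul_apply]
    simp only [mul_diagonal, transpose_apply, of_apply, mul_assoc]
  simp only [mixedDiscriminant, hcol, det_mul_eq_sum_det_mul_det]
  rw [sum_comm]
  refine sum_congr rfl fun ω _ => ?_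
  rw [← mul_sum, mul_assoc, ← det_transpose (G.submatrix _ _),
    ← sum_perm_det_mul_eq_det_mul_permanent]
  rfl

end Matrix

namespace MvPolynomial

open Matrix

variable {n R : Type*} [Fintype n] [DecidableEq n] [CommRing R]

theorem coeff_sum_single_one_prod_X (q : n → n) :
    coeff (∑ i, Finsupp.single i 1) (∏ b, X (q b) : MvPolynomial n R) =
      if q.Bijective then 1 else 0 := by
  have hsingles : (∑ b, Finsupp.single (q b) 1 = ∑ i, Finsupp.single i 1) ↔ q.Bijective := by
    refine ⟨fun h => ?_, fun hq => hq.sum_comp fun i => Finsupp.single i 1⟩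
    refine Finite.surjective_iff_bijective.1 fun i => ?_
    by_contra! hi
    have := congrArg (· i) h
    simp [Finsupp.single_apply, hi] at this
  simp only [X, ← monomial_sum_one, coeff_monomial, hsingles]

theorem coeff_det_sum_X_mul_C (E : n → Matrix n n R) :
    coeff (∑ i, Finsupp.single i 1) (det (of fun a b => ∑ i, X i * C (E i a b))) =
      mixedDiscriminant E := by
  have hterm (σ : Perm n) (q : n → n) :
      coeff (∑ i, Finsupp.single i 1)
        ((Perm.sign σ : MvPolynomial n R) * ((∏ b, X (q b)) * C (∏ b, E (q b) (σ b) b))) =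
      if q.Bijective then (Perm.sign σ : R) * ∏ b, E (q b) (σ b) b else 0 := by
    rw [← map_intCast (C : R →+* MvPolynomial n R), mul_comm (∏ b, X (q b)), ← mul_assoc,
      ← map_mul, coeff_C_mul, coeff_sum_single_one_prod_X, mul_ite, mul_one, mul_zero]
  simp only [mixedDiscriminant, det_apply', of_apply, prod_univ_sum, Fintype.piFinset_univ,
    prod_mul_distrib, ← map_prod, mul_sum, coeff_sum, hterm, ← sum_filter,
    Perm.sum_filter_bijective]
  exact sum_comm

end MvPolynomial

theorem polarizedCompound_apply {I J m : ℕ} (T : Fin m → Matrix (Fin I) (Fin J) ℝ)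
    (s : {s : Finset (Fin I) // s.card = m}) (t : {t : Finset (Fin J) // t.card = m}) :
    polarizedCompound T s t =
      Matrix.mixedDiscriminant fun i => (T i).submatrix (s.1.orderEmbOfFin s.2)
        (t.1.orderEmbOfFin t.2) :=
  MvPolynomial.coeff_det_sum_X_mul_C _

theorem compound_apply {α : Type*} [CommRing α] {I J : ℕ} (m : ℕ) (A : Matrix (Fin I) (Fin J) α)
    (s : {s : Finset (Fin I) // s.card = m}) (t : {t : Finset (Fin J) // t.card = m}) :
    compound m A s t = (A.submatrix (s.1.orderEmbOfFin s.2) (t.1.orderEmbOfFin t.2)).det :=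
  rfl

theorem Rmat_apply {K R : ℕ} (m : ℕ) (C : Matrix (Fin K) (Fin R) ℝ) (i : Fin m → Fin K)
    (t : {t : Finset (Fin R) // t.card = m}) :
    Rmat m C i t = permanent (C.submatrix i (t.1.orderEmbOfFin t.2)) :=
  rfl

theorem permanent_eq_matrix_permanent {α : Type*} [CommRing α] {n : ℕ}
    (A : Matrix (Fin n) (Fin n) α) : permanent A = A.permanent :=
  A.permanent_transpose

theorem stmt18_general {I J K R m : ℕ} (A : Matrix (Fin I) (Fin R) ℝ) (B : Matrix (Fin J) (Fin R) ℝ)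
    (C : Matrix (Fin K) (Fin R) ℝ) :
    (Matrix.of fun (p : {s : Finset (Fin I) // s.card = m} × {t : Finset (Fin J) // t.card = m})
        (j : Fin m → Fin K) =>
      polarizedCompound
        (fun a => Matrix.of fun i' j' => ∑ r, A i' r * B j' r * C (j a) r) p.1 p.2) =
      khatriRao (compound m A) (compound m B) * (Rmat m C)ᵀ := by
  ext ⟨s, t⟩ j
  have hslices : (fun i => (Matrix.of fun i' j' => ∑ r, A i' r * B j' r * C (j i) r).submatrix
      (s.1.orderEmbOfFin s.2) (t.1.orderEmbOfFin t.2)) = fun i =>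
      A.submatrix (s.1.orderEmbOfFin s.2) id * Matrix.diagonal (C.submatrix j id i) *
        (B.submatrix (t.1.orderEmbOfFin t.2) id)ᵀ := by
    ext i a b
    rw [Matrix.mul_apply]
    simp only [Matrix.submatrix_apply, Matrix.of_apply, Matrix.mul_diagonal,
      Matrix.transpose_apply, id, mul_right_comm]
  simp only [Matrix.of_apply, polarizedCompound_apply, hslices,
    Matrix.mixedDiscriminant_mul_diagonal_mul_transpose, Matrix.mul_apply, khatriRao,
    Matrix.transpose_apply, compound_apply, Rmat_apply, permanent_eq_matrix_permanent,
    Matrix.submatrix_submatrix, Function.comp_id, Function.id_comp]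

/-- Let `T = [A,B,C]_R` with frontal slices
`T_k = (∑ r, A i r * B j r * C k r)_{i,j}`, and let `2 ≤ m ≤ min(I,J,K,R)`.  Then
`R_m(T) = [C_m(A) ⊙ C_m(B)] · R_m(C)ᵀ`, where `R_m(T)` is the `C(I,m)C(J,m) × K^m` matrix
whose column indexed by `(j_1,…,j_m) ∈ {1,…,K}^m` is `vec(D^{m−1}(T_{j_1},…,T_{j_m}))`
(here realized by indexing the rows of `R_m(T)` by the pairs of an `m`-element row subset
and an `m`-element column subset). -/
theorem stmt18 {I J K R m : ℕ} (A : Matrix (Fin I) (Fin R) ℝ) (B : Matrix (Fin J) (Fin R) ℝ)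
    (C : Matrix (Fin K) (Fin R) ℝ)
    (hm2 : 2 ≤ m) (hmI : m ≤ I) (hmJ : m ≤ J) (hmK : m ≤ K) (hmR : m ≤ R) :
    (Matrix.of fun (p : {s : Finset (Fin I) // s.card = m} × {t : Finset (Fin J) // t.card = m})
        (j : Fin m → Fin K) =>
      polarizedCompound
        (fun a => Matrix.of fun i' j' => ∑ r, A i' r * B j' r * C (j a) r) p.1 p.2) =
      khatriRao (compound m A) (compound m B) * (Rmat m C)ᵀ :=
  stmt18_general A B C
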